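/- For integers $0 \le j, k \le \ell$, the Hahn polynomial values $U_{jk} = {}_3F_2(-k, -j, k+1; 1, -\ell; 1)$ satisfy the three-term recursion in the variable $k$: $(\ell - 2j) U_{jk} = \frac{k(\ell+k+1)}{2k+1} U_{j,k-1} + \frac{(k+1)(\ell-k)}{2k+1} U_{j,k+1}$, with the conventions $U_{j,-1}=0$ and the coefficient of $U_{j,\ell+1}$ vanishing when $k=\ell$. -/

import Mathlib

/-- Pochhammer symbol (rising factorial) over ℂ. -/
noncomputable def poch (x : ℂ) (m : ℕ) : ℂ := ∏ i ∈ Finset.range m, (x + i)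

/-- Hahn polynomial value `U_{j k} = ₃F₂(-k, -j, k+1; 1, -ℓ; 1)` (terminating sum). -/
noncomputable def hahnU (ℓ j k : ℕ) : ℂ :=
  ∑ m ∈ Finset.range (k + 1),
    (poch (-(k : ℂ)) m * poch (-(j : ℂ)) m * poch ((k : ℂ) + 1) m) /
      (poch 1 m * poch (-(ℓ : ℂ)) m * (Nat.factorial m : ℂ))

lemma poch_zero (x : ℂ) : poch x 0 = 1 := by simp [poch]

lemma poch_succ (x : ℂ) (m : ℕ) : poch x (m+1) = poch x m * (x + m) := by
  simp [poch, Finset.prod_range_succ]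

lemma poch_succ' (x : ℂ) (m : ℕ) : poch x (m+1) = x * poch (x+1) m := by
  rw [poch, Finset.prod_range_succ']
  simp only [Nat.cast_zero, add_zero, mul_comm]
  congr 1
  apply Finset.prod_congr rfl
  intro i _
  push_cast
  ring

lemma poch_nat_zero (n : ℕ) {m : ℕ} (h : n < m) : poch (-(n:ℂ)) m = 0 :=
  Finset.prod_eq_zero (Finset.mem_range.2 h) (by simp)

lemma poch_one_eq (m : ℕ) : poch 1 m = (Nat.factorial m : ℂ) := by
  induction m with
  | zero => simp [poch]
  | succ n ih => rw [poch_succ, ih, Nat.factorial_succ]; push_cast; ring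

lemma poch_nat_ne_zero {ℓ n : ℕ} (h : n ≤ ℓ) : poch (-(ℓ:ℂ)) n ≠ 0 := by
  rw [poch, Finset.prod_ne_zero_iff]
  intro i hi
  rw [Finset.mem_range] at hi
  have : (i : ℂ) ≠ (ℓ : ℂ) := by
    exact_mod_cast Nat.ne_of_lt (lt_of_lt_of_le hi h)
  intro hcon
  exact this (by linear_combination hcon)

lemma poch_ratio (x : ℂ) (m : ℕ) :
    (x + m) * (poch (1 - x) m * poch x m) = (x - m) * (poch (-x) m * poch (x+1) m) := by
  induction m with
  | zero => simp [poch]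
  | succ n ih =>
    rw [poch_succ, poch_succ, poch_succ, poch_succ]
    push_cast
    linear_combination (x + n + 1) * (1 - x + n) * ih

set_option maxHeartbeats 1600000 in
lemma key (x L y mm J A B C E D1 D2 : ℂ)
    (hA : (x + mm) * A = (x - mm) * B)
    (hE : (x + 1 - mm) * E = (x + 1 + mm) * B)
    (hB : B = C * ((mm - 1) - x) * (x + mm))
    (hD : D2 = D1 * (mm * mm * (mm - 1 - L)))
    (hx1 : x + mm ≠ 0) (hx2 : x + 1 - mm ≠ 0) (hx3 : 2*x+1 ≠ 0)
    (hd1 : D1 ≠ 0) (hd2 : D2 ≠ 0) :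
    (L - 2*y) * (J * B / D2) =
      x*(L+x+1)/(2*x+1) * (J * A / D2)
      + (x+1)*(L-x)/(2*x+1) * (J * E / D2)
      + 2 * (J * (mm - y)) * B / D2
      - 2 * J * C / D1 := by
  have hA2 : A = (x - mm) * (C * ((mm - 1) - x)) :=
    mul_left_cancel₀ hx1 (by linear_combination hA + (x - mm) * hB)
  have hE2 : E = -((x + 1 + mm) * (C * (x + mm))) :=
    mul_left_cancel₀ hx2 (by linear_combination hE + (x + 1 + mm) * hB)
  have h5 : 2 * J * C / D1 = 2 * J * C * (mm * mm * (mm - 1 - L)) / D2 := by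
    rw [div_eq_div_iff hd1 hd2]
    linear_combination (2 * J * C) * hD
  rw [hA2, hE2, hB, h5]
  field_simp
  ring

/-- single term of the hypergeometric sum -/
noncomputable def Tm (ℓ j a m : ℕ) : ℂ :=
  (poch (-(a : ℂ)) m * poch (-(j : ℂ)) m * poch ((a : ℂ) + 1) m) /
    (poch 1 m * poch (-(ℓ : ℂ)) m * (Nat.factorial m : ℂ))

/-- the telescoping auxiliary sequence -/
noncomputable def Gm (ℓ j k m : ℕ) : ℂ :=
  if m = 0 then 0 else
    2 * poch (-(j : ℂ)) m * (poch (-(k : ℂ)) (m-1) * poch ((k : ℂ) + 1) (m-1)) /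
      (poch 1 (m-1) * poch (-(ℓ : ℂ)) (m-1) * (Nat.factorial (m-1) : ℂ))

lemma Tm_zero_of_lt {a m : ℕ} (h : a < m) (ℓ j : ℕ) : Tm ℓ j a m = 0 := by
  rw [Tm, poch_nat_zero a h, zero_mul, zero_mul, zero_div]

lemma hahnU_ext (ℓ j a : ℕ) (h : a ≤ ℓ + 1) :
    hahnU ℓ j a = ∑ m ∈ Finset.range (ℓ + 2), Tm ℓ j a m := by
  rw [hahnU]
  have : ∀ m ∈ Finset.range (a+1),
      (poch (-(a : ℂ)) m * poch (-(j : ℂ)) m * poch ((a : ℂ) + 1) m) /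
        (poch 1 m * poch (-(ℓ : ℂ)) m * (Nat.factorial m : ℂ)) = Tm ℓ j a m := by
    intro m _; rfl
  rw [Finset.sum_congr rfl this]
  apply Finset.sum_subset (Finset.range_subset_range.2 (by omega))
  intro m _ hm
  rw [Finset.mem_range, not_lt] at hm
  exact Tm_zero_of_lt (by omega) ℓ j

lemma key2 (x L J C P Q D1 D2 : ℂ)
    (hr : (2*x+1) * C = P * Q)
    (hD : D2 = D1 * ((1+x) * (x - L) * (x+1)))
    (h1 : 2*x+1 ≠ 0) (hxL : x - L ≠ 0) (hx1 : x + 1 ≠ 0)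
    (hd1 : D1 ≠ 0) (hd2 : D2 ≠ 0) :
    (x+1)*(L-x)/(2*x+1) * (P * -1 * J * (Q * (x+2+x)) / D2) = 2*J*C/D1 := by
  rw [div_mul_div_comm, div_eq_div_iff (mul_ne_zero h1 hd2) hd1]
  linear_combination ((x+1) * (L-x) * (x+2+x) * J * D1) * hr + (-2*J*C*(2*x+1)) * hD

lemma two_k_ne (k : ℕ) : 2*(k:ℂ)+1 ≠ 0 := by
  have h : ((2*k+1 : ℕ) : ℂ) ≠ 0 := Nat.cast_ne_zero.2 (by omega)
  push_cast at h
  exact h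

lemma D_ne_zero {ℓ n : ℕ} (h : n ≤ ℓ) :
    poch 1 n * poch (-(ℓ:ℂ)) n * (Nat.factorial n : ℂ) ≠ 0 := by
  refine mul_ne_zero (mul_ne_zero ?_ (poch_nat_ne_zero h)) ?_
  · rw [poch_one_eq]
    exact_mod_cast Nat.factorial_ne_zero n
  · exact_mod_cast Nat.factorial_ne_zero n

lemma Gm_zero (ℓ j k : ℕ) : Gm ℓ j k 0 = 0 := by simp [Gm]

lemma Gm_succ (ℓ j k n : ℕ) :
    Gm ℓ j k (n+1) = 2 * poch (-(j:ℂ)) (n+1) * (poch (-(k:ℂ)) n * poch ((k:ℂ)+1) n) /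
      (poch 1 n * poch (-(ℓ:ℂ)) n * (Nat.factorial n : ℂ)) := by
  simp [Gm]

set_option maxHeartbeats 1600000 in
lemma termwise (ℓ j k m : ℕ) (hj : j ≤ ℓ) (hk1 : 1 ≤ k) (hk : k ≤ ℓ) (hm : m ≤ ℓ + 1) :
    ((ℓ:ℂ) - 2*(j:ℂ)) * Tm ℓ j k m =
      (k:ℂ) * ((ℓ:ℂ) + (k:ℂ) + 1) / (2*(k:ℂ)+1) * Tm ℓ j (k-1) m
      + ((k:ℂ)+1) * ((ℓ:ℂ) - (k:ℂ)) / (2*(k:ℂ)+1) * Tm ℓ j (k+1) m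
      + (Gm ℓ j k (m+1) - Gm ℓ j k m) := by
  have h2k : 2*(k:ℂ)+1 ≠ 0 := two_k_ne k
  rcases Nat.lt_or_ge m (ℓ+1) with hm' | hm'
  · -- m ≤ ℓ
    have hmle : m ≤ ℓ := by omega
    rcases m with _ | n
    · -- m = 0
      have hp1 : poch (-(j:ℂ)) 1 = -(j:ℂ) := by
        rw [show (1:ℕ) = 0+1 from rfl, poch_succ, poch_zero]
        simp
      rw [Tm, Tm, Tm, Gm_zero, Gm_succ]
      simp only [poch_zero, Nat.factorial_zero, hp1]
      push_cast
      field_simp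
      ring
    · -- m = n+1
      have hnl : n ≤ ℓ := by omega
      have hD1 : poch 1 n * poch (-(ℓ:ℂ)) n * (Nat.factorial n : ℂ) ≠ 0 := D_ne_zero hnl
      have hD2 : poch 1 (n+1) * poch (-(ℓ:ℂ)) (n+1) * (Nat.factorial (n+1) : ℂ) ≠ 0 :=
        D_ne_zero (by omega)
      rcases lt_trichotomy n k with hnk | hnk | hnk
      · -- main case : 1 ≤ m = n+1 ≤ k
        rw [Tm, Tm, Tm, Gm_succ, Gm_succ]
        rw [Nat.cast_sub hk1, Nat.cast_one]
        push_cast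
        rw [show -((k:ℂ) - 1) = 1 - (k:ℂ) by ring,
            show (k:ℂ) - 1 + 1 = (k:ℂ) by ring,
            show (k:ℂ) + 1 + 1 = (k:ℂ) + 2 by ring,
            poch_succ (-(j:ℂ)) (n+1)]
        push_cast
        have hA : ((k:ℂ) + ((n:ℂ)+1)) * (poch (1 - (k:ℂ)) (n+1) * poch ((k:ℂ)) (n+1)) =
            ((k:ℂ) - ((n:ℂ)+1)) * (poch (-(k:ℂ)) (n+1) * poch ((k:ℂ)+1) (n+1)) := by
          have h := poch_ratio (k:ℂ) (n+1)
          push_cast at h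
          linear_combination h
        have hE : ((k:ℂ) + 1 - ((n:ℂ)+1)) * (poch (-((k:ℂ)+1)) (n+1) * poch ((k:ℂ)+2) (n+1)) =
            ((k:ℂ) + 1 + ((n:ℂ)+1)) * (poch (-(k:ℂ)) (n+1) * poch ((k:ℂ)+1) (n+1)) := by
          have h := poch_ratio ((k:ℂ)+1) (n+1)
          rw [show (1:ℂ) - ((k:ℂ)+1) = -(k:ℂ) by ring,
              show ((k:ℂ)+1)+1 = (k:ℂ)+2 by ring] at h
          push_cast at h
          linear_combination -h
        have hB : poch (-(k:ℂ)) (n+1) * poch ((k:ℂ)+1) (n+1) =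
            (poch (-(k:ℂ)) n * poch ((k:ℂ)+1) n) * ((((n:ℂ)+1) - 1) - (k:ℂ)) * ((k:ℂ) + ((n:ℂ)+1)) := by
          rw [poch_succ, poch_succ]
          ring
        have hD : poch 1 (n+1) * poch (-(ℓ:ℂ)) (n+1) * (Nat.factorial (n+1) : ℂ) =
            (poch 1 n * poch (-(ℓ:ℂ)) n * (Nat.factorial n : ℂ)) *
              (((n:ℂ)+1) * ((n:ℂ)+1) * (((n:ℂ)+1) - 1 - (ℓ:ℂ))) := by
          rw [poch_succ 1 n, poch_succ (-(ℓ:ℂ)) n, Nat.factorial_succ]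
          push_cast
          ring
        have hx1 : (k:ℂ) + ((n:ℂ)+1) ≠ 0 := by
          have h : ((k+n+1 : ℕ) : ℂ) ≠ 0 := Nat.cast_ne_zero.2 (by omega)
          intro hcon; apply h; push_cast; linear_combination hcon
        have hx2 : (k:ℂ) + 1 - ((n:ℂ)+1) ≠ 0 := by
          have h : ((k - n : ℕ) : ℂ) ≠ 0 := Nat.cast_ne_zero.2 (by omega)
          rw [Nat.cast_sub (le_of_lt hnk)] at h
          intro hcon; apply h; linear_combination hcon
        linear_combination key (k:ℂ) (ℓ:ℂ) (j:ℂ) ((n:ℂ)+1) (poch (-(j:ℂ)) (n+1))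
          (poch (1 - (k:ℂ)) (n+1) * poch ((k:ℂ)) (n+1))
          (poch (-(k:ℂ)) (n+1) * poch ((k:ℂ)+1) (n+1))
          (poch (-(k:ℂ)) n * poch ((k:ℂ)+1) n)
          (poch (-((k:ℂ)+1)) (n+1) * poch ((k:ℂ)+2) (n+1))
          (poch 1 n * poch (-(ℓ:ℂ)) n * (Nat.factorial n : ℂ))
          (poch 1 (n+1) * poch (-(ℓ:ℂ)) (n+1) * (Nat.factorial (n+1) : ℂ))
          hA hE hB hD hx1 hx2 h2k hD1 hD2
      · -- boundary case : m = k+1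
        subst hnk
        rw [Tm_zero_of_lt (by omega), Tm_zero_of_lt (by omega), Tm, Gm_succ, Gm_succ,
            poch_nat_zero n (show n < n+1 by omega)]
        push_cast
        rw [show (n:ℂ) + 1 + 1 = (n:ℂ) + 2 by ring,
            poch_succ (-((n:ℂ)+1)) n, poch_succ ((n:ℂ)+2) n,
            show -((n:ℂ)+1) + (n:ℂ) = -1 by ring]
        push_cast
        have hr : (2*(n:ℂ)+1) * (poch (-(n:ℂ)) n * poch ((n:ℂ)+1) n) =
            poch (-((n:ℂ)+1)) n * poch ((n:ℂ)+2) n := by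
          have h := poch_ratio ((n:ℂ)+1) n
          rw [show (1:ℂ) - ((n:ℂ)+1) = -(n:ℂ) by ring,
              show ((n:ℂ)+1)+1 = (n:ℂ)+2 by ring] at h
          linear_combination h
        have hD : poch 1 (n+1) * poch (-(ℓ:ℂ)) (n+1) * (Nat.factorial (n+1) : ℂ) =
            (poch 1 n * poch (-(ℓ:ℂ)) n * (Nat.factorial n : ℂ)) *
              ((1+(n:ℂ)) * ((n:ℂ) - (ℓ:ℂ)) * ((n:ℂ)+1)) := by
          rw [poch_succ 1 n, poch_succ (-(ℓ:ℂ)) n, Nat.factorial_succ]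
          push_cast
          ring
        have hxL : (n:ℂ) - (ℓ:ℂ) ≠ 0 := by
          have h : ((ℓ - n : ℕ) : ℂ) ≠ 0 := Nat.cast_ne_zero.2 (by omega)
          rw [Nat.cast_sub (by omega)] at h
          intro hcon; apply h; linear_combination -hcon
        have hx1 : (n:ℂ) + 1 ≠ 0 := by
          have h : ((n+1 : ℕ) : ℂ) ≠ 0 := Nat.cast_ne_zero.2 (by omega)
          push_cast at h; exact h
        linear_combination -key2 (n:ℂ) (ℓ:ℂ) (poch (-(j:ℂ)) (n+1))
          (poch (-(n:ℂ)) n * poch ((n:ℂ)+1) n)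
          (poch (-((n:ℂ)+1)) n) (poch ((n:ℂ)+2) n)
          (poch 1 n * poch (-(ℓ:ℂ)) n * (Nat.factorial n : ℂ))
          (poch 1 (n+1) * poch (-(ℓ:ℂ)) (n+1) * (Nat.factorial (n+1) : ℂ))
          hr hD (two_k_ne n) hxL hx1 hD1 hD2
      · -- m ≥ k+2 : everything vanishes
        rw [Tm_zero_of_lt (by omega), Tm_zero_of_lt (by omega), Tm_zero_of_lt (by omega),
            Gm_succ, Gm_succ, poch_nat_zero k (show k < n by omega),
            poch_nat_zero k (show k < n+1 by omega)]
        simp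
  · -- m = ℓ + 1 : everything vanishes since j ≤ ℓ
    have hm'' : m = ℓ + 1 := by omega
    subst hm''
    have e1 : ∀ a : ℕ, Tm ℓ j a (ℓ+1) = 0 := fun a => by
      rw [Tm, poch_nat_zero j (by omega)]
      simp
    rw [e1, e1, e1, Gm_succ, Gm_succ, poch_nat_zero j (show j < ℓ+1 by omega),
        poch_nat_zero j (show j < ℓ+1+1 by omega)]
    simp

/-- Three-term recursion in the variable `k` for the Hahn polynomial values.
The term with index `k-1` has vanishing coefficient when `k = 0`, and the one with
index `k+1` has vanishing coefficient `ℓ - k` when `k = ℓ`. -/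
theorem hahn_recursion_k (ℓ j k : ℕ) (hj : j ≤ ℓ) (hk : k ≤ ℓ) :
    ((ℓ : ℂ) - 2 * (j : ℂ)) * hahnU ℓ j k =
      (k : ℂ) * ((ℓ : ℂ) + k + 1) / (2 * (k : ℂ) + 1) * hahnU ℓ j (k - 1) +
        ((k : ℂ) + 1) * ((ℓ : ℂ) - k) / (2 * (k : ℂ) + 1) * hahnU ℓ j (k + 1) := by
  rcases Nat.eq_zero_or_pos k with hk0 | hk1
  · subst hk0
    have h0 : hahnU ℓ j 0 = 1 := by
      rw [hahnU]
      simp [poch]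
    have h1 : hahnU ℓ j 1 = 1 + (-1) * (-(j:ℂ)) * 2 / (1 * (-(ℓ:ℂ)) * 1) := by
      rw [hahnU, Finset.sum_range_succ, Finset.sum_range_one]
      norm_num [poch, Finset.prod_range_one]
    rcases Nat.eq_zero_or_pos ℓ with hl0 | hl1
    · subst hl0
      have hj0 : j = 0 := by omega
      subst hj0
      rw [h0]
      norm_num
    · have hl : (ℓ:ℂ) ≠ 0 := Nat.cast_ne_zero.2 (by omega)
      rw [h0, h1]
      push_cast
      field_simp
      linear_combination
  · have hext : ∀ a : ℕ, a ≤ ℓ + 1 →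
        hahnU ℓ j a = ∑ m ∈ Finset.range (ℓ + 2), Tm ℓ j a m := fun a ha => hahnU_ext ℓ j a ha
    rw [hext k (by omega), hext (k-1) (by omega), hext (k+1) (by omega),
        Finset.mul_sum, Finset.mul_sum, Finset.mul_sum]
    have hcongr : ∀ m ∈ Finset.range (ℓ + 2),
        ((ℓ:ℂ) - 2*(j:ℂ)) * Tm ℓ j k m =
          ((k:ℂ) * ((ℓ:ℂ) + (k:ℂ) + 1) / (2*(k:ℂ)+1) * Tm ℓ j (k-1) m
            + ((k:ℂ)+1) * ((ℓ:ℂ) - (k:ℂ)) / (2*(k:ℂ)+1) * Tm ℓ j (k+1) m)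
          + (Gm ℓ j k (m+1) - Gm ℓ j k m) := by
      intro m hmr
      rw [Finset.mem_range] at hmr
      have := termwise ℓ j k m hj hk1 hk (by omega)
      linear_combination this
    rw [Finset.sum_congr rfl hcongr, Finset.sum_add_distrib,
        Finset.sum_range_sub (fun m => Gm ℓ j k m), Finset.sum_add_distrib]
    have hG2 : Gm ℓ j k (ℓ+2) = 0 := by
      rw [show ℓ+2 = (ℓ+1)+1 from rfl, Gm_succ, poch_nat_zero j (show j < ℓ+1+1 by omega)]
      simp
    rw [hG2, Gm_zero]
    ring
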